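/- Let R be a Γ-graded integral domain and Y a nonempty subset of HStar_f(R). Then the supremum ⋁(Y) is a finite-type homogeneous star operation, and for every nonzero homogeneous fractional ideal A of R, A^{⋁(Y)} = ⋃ { A^{σ₁∘⋯∘σₙ} : σ₁,…,σₙ ∈ Y, n ∈ ℕ }. -/

import Mathlib

/-!
The supremum is `A ↦ ⋃ (σ₁ ∘ ⋯ ∘ σₙ)(A)` over nonempty words in `Y`. Each `σ` is extensive and
monotone, so the compositions form a directed family closed under composition; their union is
therefore a fractional ideal satisfying every axiom of a homogeneous star operation except
possibly idempotence, and it lies below every star operation dominating `Y` because such an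
operation absorbs compositions. Idempotence and finite type both come from finite type of the
`σᵢ`: an element of `(σ₁ ∘ ⋯ ∘ σₙ)(A)` already lies in `(σ₁ ∘ ⋯ ∘ σₙ)(B)` for a finitely
generated homogeneous `B ⊆ A`, and a finitely generated submodule of a directed union lies in
one member of it.
-/

open FractionalIdeal
open scoped Classical

section Setup

variable {Γ : Type*} [AddCommMonoid Γ] [LinearOrder Γ] [IsOrderedCancelAddMonoid Γ] [DecidableEq Γ]
  {R : Type*} [CommRing R] [IsDomain R]
  (𝒜 : Γ → AddSubgroup R) [GradedRing 𝒜]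
  (K : Type*) [Field K] [Algebra R K] [IsFractionRing R K]

/-- The integral ideal corresponding to a fractional ideal contained in `R`. -/
def idealOf (J : FractionalIdeal (nonZeroDivisors R) K) : Ideal R :=
  (J : Submodule R K).comap (Algebra.linearMap R K)

/-- An integral ideal is homogeneous if it contains all homogeneous components of its elements. -/
def IsHomIdeal (I : Ideal R) : Prop := ∀ f ∈ I, ∀ γ : Γ, GradedRing.proj 𝒜 γ f ∈ I

/-- `C(I)`: the homogeneous ideal generated by the homogeneous components of elements of `I`. -/
def homC (I : Ideal R) : Ideal R :=
  Ideal.span {x | ∃ f ∈ I, ∃ γ : Γ, x = GradedRing.proj 𝒜 γ f}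

/-- `C(J)` for a fractional ideal `J ⊆ R`, as a fractional ideal. -/
def Cfrac (J : FractionalIdeal (nonZeroDivisors R) K) : FractionalIdeal (nonZeroDivisors R) K :=
  ↑(homC 𝒜 (idealOf K J))

/-- A fractional ideal is homogeneous if some nonzero homogeneous `s ∈ R` multiplies it into a
homogeneous integral ideal. -/
def IsHomFrac (A : FractionalIdeal (nonZeroDivisors R) K) : Prop :=
  ∃ s : R, s ≠ 0 ∧ SetLike.IsHomogeneousElem 𝒜 s ∧
    spanSingleton (nonZeroDivisors R) (algebraMap R K s) * A ≤ 1 ∧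
    IsHomIdeal 𝒜 (idealOf K (spanSingleton (nonZeroDivisors R) (algebraMap R K s) * A))

/-- A homogeneous element of the homogeneous quotient field, viewed inside `K`. -/
def IsHomElem (x : K) : Prop :=
  ∃ a b : R, SetLike.IsHomogeneousElem 𝒜 a ∧ SetLike.IsHomogeneousElem 𝒜 b ∧ b ≠ 0 ∧
    x * algebraMap R K b = algebraMap R K a

end Setup

/-- A homogeneous star operation on the graded domain `R`. -/
structure HomStarOp {Γ : Type*} [AddCommMonoid Γ] [LinearOrder Γ] [IsOrderedCancelAddMonoid Γ] [DecidableEq Γ]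
    {R : Type*} [CommRing R] [IsDomain R] (𝒜 : Γ → AddSubgroup R) [GradedRing 𝒜]
    (K : Type*) [Field K] [Algebra R K] [IsFractionRing R K] where
  toFun : FractionalIdeal (nonZeroDivisors R) K → FractionalIdeal (nonZeroDivisors R) K
  hom : ∀ A, A ≠ 0 → IsHomFrac 𝒜 K A → IsHomFrac 𝒜 K (toFun A)
  map_span : ∀ x : K, x ≠ 0 → IsHomElem 𝒜 K x →
    toFun (spanSingleton (nonZeroDivisors R) x) = spanSingleton (nonZeroDivisors R) x
  map_smul : ∀ x : K, x ≠ 0 → IsHomElem 𝒜 K x → ∀ A, A ≠ 0 → IsHomFrac 𝒜 K A →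
    toFun (spanSingleton (nonZeroDivisors R) x * A) = spanSingleton (nonZeroDivisors R) x * toFun A
  le_star : ∀ A, A ≠ 0 → IsHomFrac 𝒜 K A → A ≤ toFun A
  mono : ∀ A B, A ≠ 0 → B ≠ 0 → IsHomFrac 𝒜 K A → IsHomFrac 𝒜 K B → A ≤ B → toFun A ≤ toFun B
  idem : ∀ A, A ≠ 0 → IsHomFrac 𝒜 K A → toFun (toFun A) = toFun A

/-- A classical star operation on the domain `R`. -/
structure StarOp (R : Type*) [CommRing R] [IsDomain R]
    (K : Type*) [Field K] [Algebra R K] [IsFractionRing R K] where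
  toFun : FractionalIdeal (nonZeroDivisors R) K → FractionalIdeal (nonZeroDivisors R) K
  map_span : ∀ x : K, x ≠ 0 →
    toFun (spanSingleton (nonZeroDivisors R) x) = spanSingleton (nonZeroDivisors R) x
  map_smul : ∀ x : K, x ≠ 0 → ∀ A, A ≠ 0 →
    toFun (spanSingleton (nonZeroDivisors R) x * A) = spanSingleton (nonZeroDivisors R) x * toFun A
  le_star : ∀ A, A ≠ 0 → A ≤ toFun A
  mono : ∀ A B, A ≠ 0 → B ≠ 0 → A ≤ B → toFun A ≤ toFun B
  idem : ∀ A, A ≠ 0 → toFun (toFun A) = toFun A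

section EStar

variable {Γ : Type*} [AddCommMonoid Γ] [LinearOrder Γ] [IsOrderedCancelAddMonoid Γ] [DecidableEq Γ]
  {R : Type*} [CommRing R] [IsDomain R]
  (𝒜 : Γ → AddSubgroup R) [GradedRing 𝒜]
  (K : Type*) [Field K] [Algebra R K] [IsFractionRing R K]

/-- The submodule `⋂ { z⁻¹ (C(zA))^⋆ : 0 ≠ z ∈ (R : A) }`. -/
def eStarSub (s : HomStarOp 𝒜 K) (A : FractionalIdeal (nonZeroDivisors R) K) : Submodule R K :=
  ⨅ z ∈ {z : K | z ≠ 0 ∧ spanSingleton (nonZeroDivisors R) z * A ≤ 1},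
    ↑(spanSingleton (nonZeroDivisors R) z⁻¹ *
      s.toFun (Cfrac 𝒜 K (spanSingleton (nonZeroDivisors R) z * A)))

/-- The extension `e(⋆)` of a homogeneous star operation `⋆`,
`A^{e(⋆)} := ⋂ { z⁻¹ (C(zA))^⋆ : 0 ≠ z ∈ (R : A) }` (which is a fractional ideal whenever
`A` is a nonzero fractional ideal). -/
noncomputable def eStar (s : HomStarOp 𝒜 K) (A : FractionalIdeal (nonZeroDivisors R) K) :
    FractionalIdeal (nonZeroDivisors R) K :=
  if h : IsFractional (nonZeroDivisors R) (eStarSub 𝒜 K s A) then ⟨_, h⟩ else 0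

end EStar


/-- `A^{★_f}` as a set: the union of `B^★` over finitely generated `B ⊆ A`. -/
def finTypeSet {R : Type*} [CommRing R] [IsDomain R]
    (K : Type*) [Field K] [Algebra R K] [IsFractionRing R K]
    (t : FractionalIdeal (nonZeroDivisors R) K → FractionalIdeal (nonZeroDivisors R) K)
    (A : FractionalIdeal (nonZeroDivisors R) K) : Set K :=
  ⋃ B ∈ {B : FractionalIdeal (nonZeroDivisors R) K |
      B ≠ 0 ∧ B ≤ A ∧ (B : Submodule R K).FG}, {x : K | x ∈ t B}

/-- `A^{⋆_f}` as a set: the union of `B^⋆` over finitely generated homogeneous `B ⊆ A`. -/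
def homFinTypeSet {Γ : Type*} [AddCommMonoid Γ] [LinearOrder Γ] [IsOrderedCancelAddMonoid Γ] [DecidableEq Γ]
    {R : Type*} [CommRing R] [IsDomain R]
    (𝒜 : Γ → AddSubgroup R) [GradedRing 𝒜]
    (K : Type*) [Field K] [Algebra R K] [IsFractionRing R K]
    (t : FractionalIdeal (nonZeroDivisors R) K → FractionalIdeal (nonZeroDivisors R) K)
    (A : FractionalIdeal (nonZeroDivisors R) K) : Set K :=
  ⋃ B ∈ {B : FractionalIdeal (nonZeroDivisors R) K |
      B ≠ 0 ∧ B ≤ A ∧ IsHomFrac 𝒜 K B ∧ (B : Submodule R K).FG}, {x : K | x ∈ t B}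

/-- A homogeneous star operation is of finite type if
`A^⋆ = ⋃ {B^⋆ : B ⊆ A finitely generated homogeneous}`. -/
def IsFiniteTypeHomStar {Γ : Type*} [AddCommMonoid Γ] [LinearOrder Γ] [IsOrderedCancelAddMonoid Γ] [DecidableEq Γ]
    {R : Type*} [CommRing R] [IsDomain R]
    (𝒜 : Γ → AddSubgroup R) [GradedRing 𝒜]
    (K : Type*) [Field K] [Algebra R K] [IsFractionRing R K]
    (u : HomStarOp 𝒜 K) : Prop :=
  ∀ A : FractionalIdeal (nonZeroDivisors R) K, A ≠ 0 → IsHomFrac 𝒜 K A →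
    {x : K | x ∈ u.toFun A} = homFinTypeSet 𝒜 K u.toFun A

theorem Submodule.FG.exists_le_of_le_iSup {R M : Type*} [Semiring R] [AddCommMonoid M]
    [Module R M] {ι : Type*} [Nonempty ι] {N : ι → Submodule R M} (hN : Directed (· ≤ ·) N)
    {C : Submodule R M} (hC : C.FG) (h : C ≤ ⨆ i, N i) : ∃ i, C ≤ N i := by
  obtain ⟨_, ⟨i, rfl⟩, hi⟩ :=
    (CompleteLattice.isCompactElement_iff_le_of_directed_sSup_le _ C).mp
      ((Submodule.fg_iff_compact C).mp hC) (Set.range N) (Set.range_nonempty N)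
      (directedOn_range.mpr hN) (by rwa [sSup_range])
  exact ⟨i, hi⟩

section GradedIdeal

variable {Γ : Type*} [AddCommMonoid Γ] [DecidableEq Γ] {R : Type*} [CommRing R]
  {𝒜 : Γ → AddSubgroup R} [GradedRing 𝒜]

lemma isHomIdeal_iff_isHomogeneous {I : Ideal R} : IsHomIdeal 𝒜 I ↔ I.IsHomogeneous 𝒜 := by
  simp only [IsHomIdeal, Ideal.IsHomogeneous, Submodule.IsHomogeneous, GradedRing.proj_apply]
  exact ⟨fun h γ r hr => h r hr γ, fun h r hr γ => h γ hr⟩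

lemma isHomIdeal_span_singleton_mul {s : R} (hs : SetLike.IsHomogeneousElem 𝒜 s) {I : Ideal R}
    (hI : IsHomIdeal 𝒜 I) : IsHomIdeal 𝒜 (Ideal.span {s} * I) := by
  rw [isHomIdeal_iff_isHomogeneous] at hI ⊢
  exact (Ideal.homogeneous_span 𝒜 {s} (by rintro x rfl; exact hs)).mul hI

lemma isHomIdeal_sup {I J : Ideal R} (hI : IsHomIdeal 𝒜 I) (hJ : IsHomIdeal 𝒜 J) :
    IsHomIdeal 𝒜 (I ⊔ J) := by
  rw [isHomIdeal_iff_isHomogeneous] at hI hJ ⊢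
  exact hI.sup hJ

lemma mul_proj_of_mem [IsLeftCancelAdd Γ] {s : R} {d : Γ} (hs : s ∈ 𝒜 d) (f : R) (γ : Γ) :
    s * GradedRing.proj 𝒜 γ f = GradedRing.proj 𝒜 (d + γ) (s * f) := by
  -- the library lemma asks for the cancellation to be bundled into the monoid structure
  let _ : AddLeftCancelMonoid Γ := { (inferInstance : AddMonoid Γ), ‹IsLeftCancelAdd Γ› with }
  rw [GradedRing.proj_apply, GradedRing.proj_apply,
    DirectSum.coe_decompose_mul_add_of_left_mem 𝒜 hs]

lemma isHomIdeal_of_span_singleton_mul [IsLeftCancelAdd Γ] [IsDomain R] {s : R} (hs0 : s ≠ 0)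
    (hs : SetLike.IsHomogeneousElem 𝒜 s) {I : Ideal R} (h : IsHomIdeal 𝒜 (Ideal.span {s} * I)) :
    IsHomIdeal 𝒜 I := by
  intro f hf γ
  obtain ⟨d, hd⟩ := hs
  have hmem : s * GradedRing.proj 𝒜 γ f ∈ Ideal.span {s} * I := by
    rw [mul_proj_of_mem hd]
    exact h _ (Ideal.mul_mem_mul (Ideal.mem_span_singleton_self s) hf) _
  obtain ⟨c, hc, hsc⟩ := Ideal.mem_span_singleton_mul.mp hmem
  rwa [← mul_left_cancel₀ hs0 hsc]

end GradedIdeal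

section IdealOf

variable {R : Type*} [CommRing R] {K : Type*} [Field K] [Algebra R K]

lemma idealOf_coeIdeal [IsFractionRing R K] (I : Ideal R) :
    idealOf K (I : FractionalIdeal (nonZeroDivisors R) K) = I :=
  Submodule.comap_map_eq_of_injective (IsFractionRing.injective R K) I

lemma coeIdeal_idealOf [IsFractionRing R K] {J : FractionalIdeal (nonZeroDivisors R) K}
    (hJ : J ≤ 1) : (idealOf K J : FractionalIdeal (nonZeroDivisors R) K) = J := by
  obtain ⟨I, rfl⟩ := FractionalIdeal.le_one_iff_exists_coeIdeal.mp hJ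
  rw [idealOf_coeIdeal]

lemma spanSingleton_inv_mul_spanSingleton [IsFractionRing R K] {x : K} (hx : x ≠ 0) :
    spanSingleton (nonZeroDivisors R) x⁻¹ * spanSingleton (nonZeroDivisors R) x = 1 := by
  rw [spanSingleton_mul_spanSingleton, inv_mul_cancel₀ hx, spanSingleton_one]

lemma spanSingleton_mul_ne_zero [IsFractionRing R K] {x : K} (hx : x ≠ 0)
    {A : FractionalIdeal (nonZeroDivisors R) K} (hA : A ≠ 0) :
    spanSingleton (nonZeroDivisors R) x * A ≠ 0 := fun h => hA <| by
  rw [← one_mul A, ← spanSingleton_inv_mul_spanSingleton hx, mul_assoc, h, mul_zero]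

lemma spanSingleton_mul_le_one_iff [IsFractionRing R K] {x : K} (hx : x ≠ 0)
    {A : FractionalIdeal (nonZeroDivisors R) K} :
    spanSingleton (nonZeroDivisors R) x * A ≤ 1 ↔ A ≤ spanSingleton (nonZeroDivisors R) x⁻¹ := by
  have hinv := spanSingleton_inv_mul_spanSingleton (R := R) hx
  constructor
  · intro h
    calc A = spanSingleton _ x⁻¹ * (spanSingleton _ x * A) := by rw [← mul_assoc, hinv, one_mul]
      _ ≤ spanSingleton _ x⁻¹ * 1 := mul_le_mul_right h _
      _ = _ := mul_one _
  · intro h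
    calc spanSingleton _ x * A ≤ spanSingleton _ x * spanSingleton _ x⁻¹ := mul_le_mul_right h _
      _ = 1 := by rw [mul_comm, hinv]

end IdealOf

section HomFrac

variable {Γ : Type*} [AddCommMonoid Γ] [DecidableEq Γ] {R : Type*} [CommRing R]
  {𝒜 : Γ → AddSubgroup R} [GradedRing 𝒜] {K : Type*} [Field K] [Algebra R K] [IsFractionRing R K]

lemma isHomFrac_of_eq_coeIdeal {A : FractionalIdeal (nonZeroDivisors R) K} {s : R} (hs0 : s ≠ 0)
    (hs : SetLike.IsHomogeneousElem 𝒜 s) {I : Ideal R}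
    (h : spanSingleton (nonZeroDivisors R) (algebraMap R K s) * A = I) (hI : IsHomIdeal 𝒜 I) :
    IsHomFrac 𝒜 K A :=
  ⟨s, hs0, hs, h ▸ FractionalIdeal.coeIdeal_le_one, by rwa [h, idealOf_coeIdeal]⟩

lemma IsHomFrac.isHomIdeal_idealOf_mul [IsLeftCancelAdd Γ] [IsDomain R]
    {B : FractionalIdeal (nonZeroDivisors R) K} (hB : IsHomFrac 𝒜 K B) {s : R}
    (hs : SetLike.IsHomogeneousElem 𝒜 s)
    (hle : spanSingleton (nonZeroDivisors R) (algebraMap R K s) * B ≤ 1) :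
    IsHomIdeal 𝒜 (idealOf K (spanSingleton (nonZeroDivisors R) (algebraMap R K s) * B)) := by
  obtain ⟨t, ht0, ht, htle, htI⟩ := hB
  refine isHomIdeal_of_span_singleton_mul ht0 ht ?_
  have h : Ideal.span {t} * idealOf K (spanSingleton _ (algebraMap R K s) * B) =
      Ideal.span {s} * idealOf K (spanSingleton _ (algebraMap R K t) * B) := by
    refine FractionalIdeal.coeIdeal_injective (K := K) ?_
    simp only [FractionalIdeal.coeIdeal_mul, FractionalIdeal.coeIdeal_span_singleton,
      coeIdeal_idealOf hle, coeIdeal_idealOf htle]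
    ring
  rw [h]
  exact isHomIdeal_span_singleton_mul hs htI

lemma IsHomFrac.add [IsDomain R] {A B : FractionalIdeal (nonZeroDivisors R) K}
    (hA : IsHomFrac 𝒜 K A) (hB : IsHomFrac 𝒜 K B) : IsHomFrac 𝒜 K (A + B) := by
  obtain ⟨s, hs0, hs, hsle, hsI⟩ := hA
  obtain ⟨t, ht0, ht, htle, htI⟩ := hB
  refine isHomFrac_of_eq_coeIdeal (mul_ne_zero hs0 ht0) (hs.mul ht) (I :=
    Ideal.span {t} * idealOf K (spanSingleton _ (algebraMap R K s) * A) ⊔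
      Ideal.span {s} * idealOf K (spanSingleton _ (algebraMap R K t) * B)) ?_
    (isHomIdeal_sup (isHomIdeal_span_singleton_mul ht hsI) (isHomIdeal_span_singleton_mul hs htI))
  simp only [FractionalIdeal.coeIdeal_sup, FractionalIdeal.coeIdeal_mul,
    FractionalIdeal.coeIdeal_span_singleton, coeIdeal_idealOf hsle, coeIdeal_idealOf htle,
    map_mul, ← spanSingleton_mul_spanSingleton]
  ring

lemma isHomFrac_spanSingleton {x : K} (hx : IsHomElem 𝒜 K x) :
    IsHomFrac 𝒜 K (spanSingleton (nonZeroDivisors R) x) := by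
  obtain ⟨a, b, ha, hb, hb0, hab⟩ := hx
  refine isHomFrac_of_eq_coeIdeal hb0 hb (I := Ideal.span {a}) ?_ ?_
  · rw [spanSingleton_mul_spanSingleton, FractionalIdeal.coeIdeal_span_singleton, mul_comm, hab]
  · exact isHomIdeal_iff_isHomogeneous.mpr
      (Ideal.homogeneous_span 𝒜 {a} (by rintro y rfl; exact ha))

lemma IsHomFrac.spanSingleton_mul [IsDomain R] {A : FractionalIdeal (nonZeroDivisors R) K}
    (hA : IsHomFrac 𝒜 K A) {x : K} (hx : IsHomElem 𝒜 K x) :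
    IsHomFrac 𝒜 K (spanSingleton (nonZeroDivisors R) x * A) := by
  obtain ⟨a, b, ha, hb, hb0, hab⟩ := hx
  obtain ⟨s, hs0, hs, hsle, hsI⟩ := hA
  refine isHomFrac_of_eq_coeIdeal (mul_ne_zero hb0 hs0) (hb.mul hs)
    (I := Ideal.span {a} * idealOf K (spanSingleton _ (algebraMap R K s) * A)) ?_
    (isHomIdeal_span_singleton_mul ha hsI)
  rw [FractionalIdeal.coeIdeal_mul, FractionalIdeal.coeIdeal_span_singleton, coeIdeal_idealOf hsle,
    ← hab, map_mul]
  simp only [← spanSingleton_mul_spanSingleton]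
  ring

lemma isHomElem_inv_algebraMap [IsDomain R] {s : R} (hs0 : s ≠ 0)
    (hs : SetLike.IsHomogeneousElem 𝒜 s) : IsHomElem 𝒜 K (algebraMap R K s)⁻¹ :=
  ⟨1, s, SetLike.isHomogeneousElem_one 𝒜, hs, hs0, by
    rw [inv_mul_cancel₀ ((map_ne_zero_iff _ (IsFractionRing.injective R K)).mpr hs0), map_one]⟩

lemma isHomFrac_of_forall_mem [IsLeftCancelAdd Γ] [IsDomain R]
    {T : FractionalIdeal (nonZeroDivisors R) K} {s : R} (hs0 : s ≠ 0)
    (hs : SetLike.IsHomogeneousElem 𝒜 s)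
    (hT : T ≤ spanSingleton (nonZeroDivisors R) (algebraMap R K s)⁻¹)
    (h : ∀ y ∈ T, ∃ B ≤ T, IsHomFrac 𝒜 K B ∧ y ∈ B) : IsHomFrac 𝒜 K T := by
  have hs0' : algebraMap R K s ≠ 0 := (map_ne_zero_iff _ (IsFractionRing.injective R K)).mpr hs0
  have hle := (spanSingleton_mul_le_one_iff hs0').mpr hT
  refine ⟨s, hs0, hs, hle, fun r hr γ => ?_⟩
  obtain ⟨y, hy, hry⟩ := mem_singleton_mul.mp hr
  obtain ⟨B, hBT, hB, hyB⟩ := h y hy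
  have hBT' := mul_le_mul_right hBT (spanSingleton (nonZeroDivisors R) (algebraMap R K s))
  have hrB : r ∈ idealOf K (spanSingleton _ (algebraMap R K s) * B) :=
    mem_singleton_mul.mpr ⟨y, hyB, hry⟩
  exact hBT' (hB.isHomIdeal_idealOf_mul hs (hBT'.trans hle) r hrB γ)

end HomFrac

section PreStar

variable {Γ : Type*} [AddCommMonoid Γ] [DecidableEq Γ] {R : Type*} [CommRing R]
  {𝒜 : Γ → AddSubgroup R} [GradedRing 𝒜] {K : Type*} [Field K] [Algebra R K] [IsFractionRing R K]

variable (𝒜 K) in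
/-- The axioms of a homogeneous star operation except idempotence: unlike idempotence, they
survive composition. -/
structure IsHomPreStar
    (f : FractionalIdeal (nonZeroDivisors R) K → FractionalIdeal (nonZeroDivisors R) K) : Prop where
  hom : ∀ A, A ≠ 0 → IsHomFrac 𝒜 K A → IsHomFrac 𝒜 K (f A)
  map_span : ∀ x : K, x ≠ 0 → IsHomElem 𝒜 K x →
    f (spanSingleton (nonZeroDivisors R) x) = spanSingleton (nonZeroDivisors R) x
  map_smul : ∀ x : K, x ≠ 0 → IsHomElem 𝒜 K x → ∀ A, A ≠ 0 → IsHomFrac 𝒜 K A →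
    f (spanSingleton (nonZeroDivisors R) x * A) = spanSingleton (nonZeroDivisors R) x * f A
  le_self : ∀ A, A ≠ 0 → IsHomFrac 𝒜 K A → A ≤ f A
  mono : ∀ A B, A ≠ 0 → B ≠ 0 → IsHomFrac 𝒜 K A → IsHomFrac 𝒜 K B → A ≤ B → f A ≤ f B

lemma isHomPreStar_id : IsHomPreStar 𝒜 K id :=
  ⟨fun _ _ h => h, fun _ _ _ => rfl, fun _ _ _ _ _ _ => rfl, fun _ _ _ => le_rfl,
    fun _ _ _ _ _ _ h => h⟩

namespace IsHomPreStar

variable {f g : FractionalIdeal (nonZeroDivisors R) K → FractionalIdeal (nonZeroDivisors R) K}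
  {A : FractionalIdeal (nonZeroDivisors R) K}

lemma ne_zero (hf : IsHomPreStar 𝒜 K f) (hA0 : A ≠ 0) (hA : IsHomFrac 𝒜 K A) : f A ≠ 0 :=
  fun h => hA0 (FractionalIdeal.le_zero_iff.mp (h ▸ hf.le_self A hA0 hA))

lemma comp (hf : IsHomPreStar 𝒜 K f) (hg : IsHomPreStar 𝒜 K g) : IsHomPreStar 𝒜 K (f ∘ g) where
  hom A hA0 hA := hf.hom _ (hg.ne_zero hA0 hA) (hg.hom A hA0 hA)
  map_span x hx0 hx := by
    rw [Function.comp_apply, hg.map_span x hx0 hx, hf.map_span x hx0 hx]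
  map_smul x hx0 hx A hA0 hA := by
    rw [Function.comp_apply, hg.map_smul x hx0 hx A hA0 hA,
      hf.map_smul x hx0 hx _ (hg.ne_zero hA0 hA) (hg.hom A hA0 hA), Function.comp_apply]
  le_self A hA0 hA :=
    (hg.le_self A hA0 hA).trans (hf.le_self _ (hg.ne_zero hA0 hA) (hg.hom A hA0 hA))
  mono A B hA0 hB0 hA hB h :=
    hf.mono _ _ (hg.ne_zero hA0 hA) (hg.ne_zero hB0 hB) (hg.hom A hA0 hA) (hg.hom B hB0 hB)
      (hg.mono A B hA0 hB0 hA hB h)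

lemma le_spanSingleton (hf : IsHomPreStar 𝒜 K f) (hA0 : A ≠ 0) (hA : IsHomFrac 𝒜 K A) {x : K}
    (hx0 : x ≠ 0) (hx : IsHomElem 𝒜 K x) (h : A ≤ spanSingleton (nonZeroDivisors R) x) :
    f A ≤ spanSingleton (nonZeroDivisors R) x := by
  have := hf.mono A _ hA0 (spanSingleton_ne_zero_iff.mpr hx0) hA (isHomFrac_spanSingleton hx) h
  rwa [hf.map_span x hx0 hx] at this

lemma le_spanSingleton_inv [IsDomain R] (hf : IsHomPreStar 𝒜 K f) (hA0 : A ≠ 0)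
    (hA : IsHomFrac 𝒜 K A) {s : R} (hs0 : s ≠ 0) (hs : SetLike.IsHomogeneousElem 𝒜 s)
    (hle : spanSingleton (nonZeroDivisors R) (algebraMap R K s) * A ≤ 1) :
    f A ≤ spanSingleton (nonZeroDivisors R) (algebraMap R K s)⁻¹ := by
  have hs0' : algebraMap R K s ≠ 0 := (map_ne_zero_iff _ (IsFractionRing.injective R K)).mpr hs0
  exact hf.le_spanSingleton hA0 hA (inv_ne_zero hs0') (isHomElem_inv_algebraMap hs0 hs)
    ((spanSingleton_mul_le_one_iff hs0').mp hle)

end IsHomPreStar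

variable (𝒜) in
def IsFGHomSub (A B : FractionalIdeal (nonZeroDivisors R) K) : Prop :=
  B ≠ 0 ∧ B ≤ A ∧ IsHomFrac 𝒜 K B ∧ (B : Submodule R K).FG

variable (𝒜 K) in
def IsHomFinType
    (f : FractionalIdeal (nonZeroDivisors R) K → FractionalIdeal (nonZeroDivisors R) K) : Prop :=
  ∀ A, A ≠ 0 → IsHomFrac 𝒜 K A → ∀ x ∈ f A, ∃ B, IsFGHomSub 𝒜 A B ∧ x ∈ f B

lemma IsFGHomSub.add [IsDomain R] {A B B' : FractionalIdeal (nonZeroDivisors R) K}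
    (hB : IsFGHomSub 𝒜 A B) (hB' : IsFGHomSub 𝒜 A B') : IsFGHomSub 𝒜 A (B + B') := by
  obtain ⟨hB0, hBA, hB, hBfg⟩ := hB
  obtain ⟨-, hBA', hB', hBfg'⟩ := hB'
  refine ⟨fun h => hB0 (FractionalIdeal.le_zero_iff.mp (h ▸ le_self_add)), ?_, hB.add hB', ?_⟩
  · rw [← FractionalIdeal.sup_eq_add]
    exact sup_le hBA hBA'
  · rw [FractionalIdeal.coe_add]
    exact hBfg.sup hBfg'

namespace IsHomFinType

variable {f g : FractionalIdeal (nonZeroDivisors R) K → FractionalIdeal (nonZeroDivisors R) K}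

/-- `f A` is the directed union of the `f B` over the finitely generated homogeneous `B ⊆ A`,
so a finitely generated submodule of `f A` lies in one of them. -/
lemma exists_le_of_fg [IsDomain R] (hft : IsHomFinType 𝒜 K f) (hf : IsHomPreStar 𝒜 K f)
    {A : FractionalIdeal (nonZeroDivisors R) K} (hA0 : A ≠ 0) (hA : IsHomFrac 𝒜 K A)
    {C : FractionalIdeal (nonZeroDivisors R) K} (hC0 : C ≠ 0) (hC : (C : Submodule R K).FG)
    (hCA : C ≤ f A) : ∃ B, IsFGHomSub 𝒜 A B ∧ C ≤ f B := by
  obtain ⟨x, hxC, -⟩ :=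
    Submodule.exists_mem_ne_zero_of_ne_bot (FractionalIdeal.coeToSubmodule_eq_bot.not.mpr hC0)
  have : Nonempty {B // IsFGHomSub 𝒜 A B} :=
    let ⟨B, hB, _⟩ := hft A hA0 hA x (hCA hxC); ⟨⟨B, hB⟩⟩
  have hdir : Directed (· ≤ ·) fun B : {B // IsFGHomSub 𝒜 A B} => (f B.1 : Submodule R K) :=
    fun ⟨B, hB⟩ ⟨B', hB'⟩ =>
      have hBB' := hB.add hB'
      ⟨⟨B + B', hBB'⟩,
        hf.mono _ _ hB.1 hBB'.1 hB.2.2.1 hBB'.2.2.1 le_self_add,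
        hf.mono _ _ hB'.1 hBB'.1 hB'.2.2.1 hBB'.2.2.1 le_add_self⟩
  obtain ⟨⟨B, hB⟩, hCB⟩ := hC.exists_le_of_le_iSup hdir fun y hy =>
    let ⟨B, hB, hyB⟩ := hft A hA0 hA y (hCA hy)
    Submodule.mem_iSup_of_mem (⟨B, hB⟩ : {B // IsFGHomSub 𝒜 A B}) hyB
  exact ⟨B, hB, hCB⟩

lemma comp [IsDomain R] (hft : IsHomFinType 𝒜 K f) (hgt : IsHomFinType 𝒜 K g)
    (hf : IsHomPreStar 𝒜 K f) (hg : IsHomPreStar 𝒜 K g) : IsHomFinType 𝒜 K (f ∘ g) := by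
  intro A hA0 hA x hx
  obtain ⟨C, ⟨hC0, hCg, hC, hCfg⟩, hxC⟩ := hft (g A) (hg.ne_zero hA0 hA) (hg.hom A hA0 hA) x hx
  obtain ⟨B, hB, hCB⟩ := hgt.exists_le_of_fg hg hA0 hA hC0 hCfg hCg
  exact ⟨B, hB,
    hf.mono C (g B) hC0 (hg.ne_zero hB.1 hB.2.2.1) hC (hg.hom B hB.1 hB.2.2.1) hCB hxC⟩

end IsHomFinType

variable {S : Set (FractionalIdeal (nonZeroDivisors R) K → FractionalIdeal (nonZeroDivisors R) K)}

/-- `f A, g A ≤ (f ∘ g) A`, since pre-star operations are extensive and monotone. -/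
lemma directed_apply_of_isHomPreStar (hS : ∀ f ∈ S, IsHomPreStar 𝒜 K f)
    (hcomp : ∀ f ∈ S, ∀ g ∈ S, f ∘ g ∈ S) (hA0 : A ≠ 0) (hA : IsHomFrac 𝒜 K A) :
    Directed (· ≤ ·) fun f : S => (f.1 A : Submodule R K) := by
  rintro ⟨f, hf⟩ ⟨g, hg⟩
  have hgA0 := (hS g hg).ne_zero hA0 hA
  have hgA := (hS g hg).hom A hA0 hA
  exact ⟨⟨f ∘ g, hcomp f hf g hg⟩,
    FractionalIdeal.coe_le_coe.mpr
      ((hS f hf).mono _ _ hA0 hgA0 hA hgA ((hS g hg).le_self A hA0 hA)),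
    FractionalIdeal.coe_le_coe.mpr ((hS f hf).le_self _ hgA0 hgA)⟩

end PreStar

/-- `A ↦ ⋃_{f ∈ S} f A`; the junk value `A` is only taken where the union is not fractional. -/
noncomputable def starSup {R : Type*} [CommRing R] {K : Type*} [Field K] [Algebra R K]
    (S : Set (FractionalIdeal (nonZeroDivisors R) K → FractionalIdeal (nonZeroDivisors R) K))
    (A : FractionalIdeal (nonZeroDivisors R) K) : FractionalIdeal (nonZeroDivisors R) K :=
  if h : IsFractional (nonZeroDivisors R) (⨆ f : S, (f.1 A : Submodule R K)) then ⟨_, h⟩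
  else A

section Sup

variable {Γ : Type*} [AddCommMonoid Γ] [DecidableEq Γ] {R : Type*} [CommRing R] [IsDomain R]
  {𝒜 : Γ → AddSubgroup R} [GradedRing 𝒜] {K : Type*} [Field K] [Algebra R K] [IsFractionRing R K]

variable {S : Set (FractionalIdeal (nonZeroDivisors R) K → FractionalIdeal (nonZeroDivisors R) K)}
  {A : FractionalIdeal (nonZeroDivisors R) K}

lemma coe_starSup (hS : ∀ f ∈ S, IsHomPreStar 𝒜 K f) (hA0 : A ≠ 0) (hA : IsHomFrac 𝒜 K A) :
    (starSup S A : Submodule R K) = ⨆ f : S, (f.1 A : Submodule R K) := by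
  obtain ⟨s, hs0, hs, hle, -⟩ := id hA
  have hbound : ⨆ f : S, (f.1 A : Submodule R K) ≤
      spanSingleton (nonZeroDivisors R) (algebraMap R K s)⁻¹ :=
    iSup_le fun f => FractionalIdeal.coe_le_coe.mpr
      ((hS f f.2).le_spanSingleton_inv hA0 hA hs0 hs hle)
  have hfrac := FractionalIdeal.isFractional_of_le hbound
  have h : starSup S A = ⟨_, hfrac⟩ := dif_pos hfrac
  rw [h]
  rfl

lemma le_starSup (hS : ∀ f ∈ S, IsHomPreStar 𝒜 K f) {f} (hf : f ∈ S) (hA0 : A ≠ 0)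
    (hA : IsHomFrac 𝒜 K A) : f A ≤ starSup S A := by
  rw [← FractionalIdeal.coe_le_coe, coe_starSup hS hA0 hA]
  exact le_iSup (fun g : S => (g.1 A : Submodule R K)) ⟨f, hf⟩

lemma starSup_le (hS : ∀ f ∈ S, IsHomPreStar 𝒜 K f) (hA0 : A ≠ 0) (hA : IsHomFrac 𝒜 K A)
    {B : FractionalIdeal (nonZeroDivisors R) K} (h : ∀ f ∈ S, f A ≤ B) : starSup S A ≤ B := by
  rw [← FractionalIdeal.coe_le_coe, coe_starSup hS hA0 hA]
  exact iSup_le fun f => FractionalIdeal.coe_le_coe.mpr (h f f.2)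

lemma mem_starSup (hS : ∀ f ∈ S, IsHomPreStar 𝒜 K f) (hne : S.Nonempty)
    (hcomp : ∀ f ∈ S, ∀ g ∈ S, f ∘ g ∈ S) (hA0 : A ≠ 0) (hA : IsHomFrac 𝒜 K A) {x : K} :
    x ∈ starSup S A ↔ ∃ f ∈ S, x ∈ f A := by
  have := hne.to_subtype
  rw [← FractionalIdeal.mem_coe, coe_starSup hS hA0 hA,
    Submodule.mem_iSup_of_directed _ (directed_apply_of_isHomPreStar hS hcomp hA0 hA)]
  exact ⟨fun ⟨f, hx⟩ => ⟨f, f.2, hx⟩, fun ⟨f, hf, hx⟩ => ⟨⟨f, hf⟩, hx⟩⟩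

lemma isHomFrac_starSup [IsLeftCancelAdd Γ] (hS : ∀ f ∈ S, IsHomPreStar 𝒜 K f)
    (hne : S.Nonempty) (hcomp : ∀ f ∈ S, ∀ g ∈ S, f ∘ g ∈ S) (hA0 : A ≠ 0)
    (hA : IsHomFrac 𝒜 K A) : IsHomFrac 𝒜 K (starSup S A) := by
  obtain ⟨s, hs0, hs, hle, -⟩ := id hA
  refine isHomFrac_of_forall_mem hs0 hs
    (starSup_le hS hA0 hA fun f hf => (hS f hf).le_spanSingleton_inv hA0 hA hs0 hs hle)
    fun y hy => ?_
  obtain ⟨f, hf, hyf⟩ := (mem_starSup hS hne hcomp hA0 hA).mp hy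
  exact ⟨f A, le_starSup hS hf hA0 hA, (hS f hf).hom A hA0 hA, hyf⟩

lemma isHomPreStar_starSup [IsLeftCancelAdd Γ] (hS : ∀ f ∈ S, IsHomPreStar 𝒜 K f)
    (hne : S.Nonempty) (hcomp : ∀ f ∈ S, ∀ g ∈ S, f ∘ g ∈ S) : IsHomPreStar 𝒜 K (starSup S) where
  hom _ hA0 hA := isHomFrac_starSup hS hne hcomp hA0 hA
  map_span x hx0 hx := by
    have h0 := spanSingleton_ne_zero_iff (S := nonZeroDivisors R).mpr hx0
    have hh := isHomFrac_spanSingleton (𝒜 := 𝒜) (K := K) hx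
    obtain ⟨g, hg⟩ := hne
    exact le_antisymm (starSup_le hS h0 hh fun f hf => ((hS f hf).map_span x hx0 hx).le)
      (((hS g hg).le_self _ h0 hh).trans (le_starSup hS hg h0 hh))
  map_smul x hx0 hx A hA0 hA := by
    have h0 := spanSingleton_mul_ne_zero (R := R) hx0 hA0
    have hh := hA.spanSingleton_mul hx
    refine le_antisymm (starSup_le hS h0 hh fun f hf => ?_)
      (spanSingleton_mul_le_iff.mpr fun z hz => ?_)
    · rw [(hS f hf).map_smul x hx0 hx A hA0 hA]
      exact mul_le_mul_right (le_starSup hS hf hA0 hA) _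
    · obtain ⟨f, hf, hzf⟩ := (mem_starSup hS hne hcomp hA0 hA).mp hz
      refine le_starSup hS hf h0 hh ?_
      rw [(hS f hf).map_smul x hx0 hx A hA0 hA]
      exact mul_mem_mul (mem_spanSingleton_self _ x) hzf
  le_self A hA0 hA :=
    let ⟨f, hf⟩ := hne
    ((hS f hf).le_self A hA0 hA).trans (le_starSup hS hf hA0 hA)
  mono A B hA0 hB0 hA hB h := starSup_le hS hA0 hA fun f hf =>
    ((hS f hf).mono A B hA0 hB0 hA hB h).trans (le_starSup hS hf hB0 hB)

lemma isHomFinType_starSup (hS : ∀ f ∈ S, IsHomPreStar 𝒜 K f) (hne : S.Nonempty)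
    (hcomp : ∀ f ∈ S, ∀ g ∈ S, f ∘ g ∈ S) (hft : ∀ f ∈ S, IsHomFinType 𝒜 K f) :
    IsHomFinType 𝒜 K (starSup S) := by
  intro A hA0 hA x hx
  obtain ⟨f, hf, hxf⟩ := (mem_starSup hS hne hcomp hA0 hA).mp hx
  obtain ⟨B, hB, hxB⟩ := hft f hf A hA0 hA x hxf
  exact ⟨B, hB, le_starSup hS hf hB.1 hB.2.2.1 hxB⟩

/-- An element of `starSup S (starSup S A)` lies in `starSup S B` for a finitely generated `B`,
which lies in a single `g A`; then the element lies in `(f ∘ g) A` for some `f ∈ S`. -/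
lemma starSup_idem [IsLeftCancelAdd Γ] (hS : ∀ f ∈ S, IsHomPreStar 𝒜 K f) (hne : S.Nonempty)
    (hcomp : ∀ f ∈ S, ∀ g ∈ S, f ∘ g ∈ S) (hft : ∀ f ∈ S, IsHomFinType 𝒜 K f) (hA0 : A ≠ 0)
    (hA : IsHomFrac 𝒜 K A) : starSup S (starSup S A) = starSup S A := by
  have ht := isHomPreStar_starSup hS hne hcomp
  refine le_antisymm (fun x hx => ?_) (ht.le_self _ (ht.ne_zero hA0 hA) (ht.hom A hA0 hA))
  obtain ⟨B, ⟨hB0, hBt, hB, hBfg⟩, hxB⟩ := isHomFinType_starSup hS hne hcomp hft _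
    (ht.ne_zero hA0 hA) (ht.hom A hA0 hA) x hx
  have := hne.to_subtype
  obtain ⟨⟨g, hg⟩, hBg⟩ :=
    hBfg.exists_le_of_le_iSup (directed_apply_of_isHomPreStar hS hcomp hA0 hA)
      (coe_starSup hS hA0 hA ▸ FractionalIdeal.coe_le_coe.mpr hBt)
  obtain ⟨f, hf, hxf⟩ := (mem_starSup hS hne hcomp hB0 hB).mp hxB
  exact (mem_starSup hS hne hcomp hA0 hA).mpr ⟨f ∘ g, hcomp f hf g hg, (hS f hf).mono B (g A)
    hB0 ((hS g hg).ne_zero hA0 hA) hB ((hS g hg).hom A hA0 hA) hBg hxf⟩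

end Sup

section Compositions

variable {Γ : Type*} [AddCommMonoid Γ] [LinearOrder Γ] [IsOrderedCancelAddMonoid Γ] [DecidableEq Γ]
  {R : Type*} [CommRing R] [IsDomain R] {𝒜 : Γ → AddSubgroup R} [GradedRing 𝒜]
  {K : Type*} [Field K] [Algebra R K] [IsFractionRing R K]

namespace HomStarOp

lemma isHomPreStar (σ : HomStarOp 𝒜 K) : IsHomPreStar 𝒜 K σ.toFun :=
  ⟨σ.hom, σ.map_span, σ.map_smul, σ.le_star, σ.mono⟩

lemma isFiniteTypeHomStar_iff (σ : HomStarOp 𝒜 K) :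
    IsFiniteTypeHomStar 𝒜 K σ ↔ IsHomFinType 𝒜 K σ.toFun := by
  simp only [IsFiniteTypeHomStar, IsHomFinType, Set.ext_iff, homFinTypeSet, Set.mem_iUnion,
    Set.mem_ofPred_eq, exists_prop]
  refine forall₂_congr fun A hA0 => forall_congr' fun hA => ⟨fun h x => (h x).mp, fun h x => ?_⟩
  exact ⟨h x, fun ⟨B, ⟨hB0, hBA, hB, _⟩, hxB⟩ => σ.mono B A hB0 hA0 hB hA hBA hxB⟩

noncomputable def ofCompClosed
    (S : Set (FractionalIdeal (nonZeroDivisors R) K → FractionalIdeal (nonZeroDivisors R) K))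
    (hS : ∀ f ∈ S, IsHomPreStar 𝒜 K f) (hne : S.Nonempty) (hcomp : ∀ f ∈ S, ∀ g ∈ S, f ∘ g ∈ S)
    (hft : ∀ f ∈ S, IsHomFinType 𝒜 K f) : HomStarOp 𝒜 K where
  toFun := starSup S
  hom := (isHomPreStar_starSup hS hne hcomp).hom
  map_span := (isHomPreStar_starSup hS hne hcomp).map_span
  map_smul := (isHomPreStar_starSup hS hne hcomp).map_smul
  le_star := (isHomPreStar_starSup hS hne hcomp).le_self
  mono := (isHomPreStar_starSup hS hne hcomp).mono
  idem _ := starSup_idem hS hne hcomp hft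

def composite (L : List (HomStarOp 𝒜 K)) :
    FractionalIdeal (nonZeroDivisors R) K → FractionalIdeal (nonZeroDivisors R) K :=
  L.foldr (fun σ f => σ.toFun ∘ f) id

lemma composite_append (L₁ L₂ : List (HomStarOp 𝒜 K)) :
    composite (L₁ ++ L₂) = composite L₁ ∘ composite L₂ := by
  induction L₁ with
  | nil => rfl
  | cons σ L ih => exact congrArg (σ.toFun ∘ ·) ih

lemma isHomPreStar_composite (L : List (HomStarOp 𝒜 K)) : IsHomPreStar 𝒜 K (composite L) := by
  induction L with
  | nil => exact isHomPreStar_id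
  | cons σ L ih => exact σ.isHomPreStar.comp ih

lemma isHomFinType_composite {L : List (HomStarOp 𝒜 K)} (hL : L ≠ [])
    (hft : ∀ σ ∈ L, IsFiniteTypeHomStar 𝒜 K σ) : IsHomFinType 𝒜 K (composite L) := by
  induction L with
  | nil => exact absurd rfl hL
  | cons σ L ih =>
    have hσ := (σ.isFiniteTypeHomStar_iff).mp (hft σ List.mem_cons_self)
    rcases eq_or_ne L [] with rfl | hL'
    · exact hσ
    · exact hσ.comp (ih hL' fun τ hτ => hft τ (List.mem_cons_of_mem σ hτ)) σ.isHomPreStar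
        (isHomPreStar_composite L)

lemma composite_le (w : HomStarOp 𝒜 K) {L : List (HomStarOp 𝒜 K)}
    (hL : ∀ σ ∈ L, ∀ A, A ≠ 0 → IsHomFrac 𝒜 K A → σ.toFun A ≤ w.toFun A)
    {A : FractionalIdeal (nonZeroDivisors R) K} (hA0 : A ≠ 0) (hA : IsHomFrac 𝒜 K A) :
    composite L A ≤ w.toFun A := by
  induction L with
  | nil => exact w.le_star A hA0 hA
  | cons σ L ih =>
    have hL' := isHomPreStar_composite L
    calc σ.toFun (composite L A) ≤ w.toFun (composite L A) :=
          hL σ List.mem_cons_self _ (hL'.ne_zero hA0 hA) (hL'.hom A hA0 hA)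
      _ ≤ w.toFun (w.toFun A) :=
          w.mono _ _ (hL'.ne_zero hA0 hA) (w.isHomPreStar.ne_zero hA0 hA) (hL'.hom A hA0 hA)
            (w.hom A hA0 hA) (ih fun τ hτ => hL τ (List.mem_cons_of_mem σ hτ))
      _ = w.toFun A := w.idem A hA0 hA

end HomStarOp

variable (Y : Set (HomStarOp 𝒜 K))

def compositions :
    Set (FractionalIdeal (nonZeroDivisors R) K → FractionalIdeal (nonZeroDivisors R) K) :=
  {f | ∃ L : List (HomStarOp 𝒜 K), L ≠ [] ∧ (∀ σ ∈ L, σ ∈ Y) ∧ HomStarOp.composite L = f}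

variable {Y}

lemma toFun_mem_compositions {σ : HomStarOp 𝒜 K} (hσ : σ ∈ Y) : σ.toFun ∈ compositions Y :=
  ⟨[σ], List.cons_ne_nil _ _, by simpa using hσ, rfl⟩

lemma compositions_nonempty (hY : Y.Nonempty) : (compositions Y).Nonempty :=
  let ⟨_, hσ⟩ := hY
  ⟨_, toFun_mem_compositions hσ⟩

lemma comp_mem_compositions {f g} (hf : f ∈ compositions Y) (hg : g ∈ compositions Y) :
    f ∘ g ∈ compositions Y := by
  obtain ⟨L₁, hL₁, hY₁, rfl⟩ := hf
  obtain ⟨L₂, -, hY₂, rfl⟩ := hg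
  exact ⟨L₁ ++ L₂, by simp [hL₁], fun σ hσ => (List.mem_append.mp hσ).elim (hY₁ σ) (hY₂ σ),
    HomStarOp.composite_append L₁ L₂⟩

lemma isHomPreStar_of_mem_compositions {f} (hf : f ∈ compositions Y) : IsHomPreStar 𝒜 K f := by
  obtain ⟨L, -, -, rfl⟩ := hf
  exact HomStarOp.isHomPreStar_composite L

lemma isHomFinType_of_mem_compositions (hFT : ∀ u ∈ Y, IsFiniteTypeHomStar 𝒜 K u) {f}
    (hf : f ∈ compositions Y) : IsHomFinType 𝒜 K f := by
  obtain ⟨L, hL, hLY, rfl⟩ := hf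
  exact HomStarOp.isHomFinType_composite hL fun σ hσ => hFT σ (hLY σ hσ)

end Compositions

/-- for a nonempty `Y ⊆ HStar_f(R)`, the supremum `⋁(Y)` is of finite type and
`A^{⋁(Y)} = ⋃ {A^{σ₁∘⋯∘σₙ} : σᵢ ∈ Y}`. -/
theorem stmt_18
    {Γ : Type*} [AddCommMonoid Γ] [LinearOrder Γ] [IsOrderedCancelAddMonoid Γ] [DecidableEq Γ]
    {R : Type*} [CommRing R] [IsDomain R]
    (𝒜 : Γ → AddSubgroup R) [GradedRing 𝒜]
    (K : Type*) [Field K] [Algebra R K] [IsFractionRing R K]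
    (Y : Set (HomStarOp 𝒜 K)) (hY : Y.Nonempty)
    (hFT : ∀ u ∈ Y, IsFiniteTypeHomStar 𝒜 K u) :
    ∃ t : HomStarOp 𝒜 K, IsFiniteTypeHomStar 𝒜 K t ∧
      (∀ u ∈ Y, ∀ A : FractionalIdeal (nonZeroDivisors R) K, A ≠ 0 → IsHomFrac 𝒜 K A →
        u.toFun A ≤ t.toFun A) ∧
      (∀ w : HomStarOp 𝒜 K,
        (∀ u ∈ Y, ∀ A : FractionalIdeal (nonZeroDivisors R) K, A ≠ 0 → IsHomFrac 𝒜 K A →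
          u.toFun A ≤ w.toFun A) →
        (∀ A : FractionalIdeal (nonZeroDivisors R) K, A ≠ 0 → IsHomFrac 𝒜 K A →
          t.toFun A ≤ w.toFun A)) ∧
      (∀ A : FractionalIdeal (nonZeroDivisors R) K, A ≠ 0 → IsHomFrac 𝒜 K A →
        {x : K | x ∈ t.toFun A} =
          {x : K | ∃ L : List (HomStarOp 𝒜 K), L ≠ [] ∧ (∀ σ ∈ L, σ ∈ Y) ∧
            x ∈ (L.foldr (fun σ f => σ.toFun ∘ f) id) A}) := by
  have hS : ∀ f ∈ compositions Y, IsHomPreStar 𝒜 K f := fun _ => isHomPreStar_of_mem_compositions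
  have hne := compositions_nonempty hY
  have hcomp : ∀ f ∈ compositions Y, ∀ g ∈ compositions Y, f ∘ g ∈ compositions Y :=
    fun _ hf _ hg => comp_mem_compositions hf hg
  have hft : ∀ f ∈ compositions Y, IsHomFinType 𝒜 K f :=
    fun _ => isHomFinType_of_mem_compositions hFT
  refine ⟨HomStarOp.ofCompClosed (compositions Y) hS hne hcomp hft,
    (HomStarOp.isFiniteTypeHomStar_iff _).mpr (isHomFinType_starSup hS hne hcomp hft),
    fun u hu A hA0 hA => le_starSup hS (toFun_mem_compositions hu) hA0 hA,
    fun w hw A hA0 hA => starSup_le hS hA0 hA ?_, fun A hA0 hA => Set.ext fun x => ?_⟩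
  · rintro _ ⟨L, -, hLY, rfl⟩
    exact w.composite_le (fun σ hσ => hw σ (hLY σ hσ)) hA0 hA
  · exact (mem_starSup hS hne hcomp hA0 hA).trans
      ⟨fun ⟨_, ⟨L, hL, hLY, rfl⟩, hx⟩ => ⟨L, hL, hLY, hx⟩,
        fun ⟨L, hL, hLY, hx⟩ => ⟨_, ⟨L, hL, hLY, rfl⟩, hx⟩⟩
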